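/- With R1, R2, Θ independent, R1 ~ μ_{λ1,c1}, R2 ~ μ_{λ2,c2}, Θ uniform on (0, π), and ρ = √(R1² + R2² − 2·R1·R2·cos Θ), for every r with c1·t < r ≤ (c1 + c2)·t the joint probability P(ρ < r, R1 = c1·t, R2 < c2·t) equals e^{−λ1t}·[1 − exp(−λ2t + (λ2/c2)·√(c2²t² − (r − c1t)²))] + (λ2·e^{−(λ1+λ2)t}/(π·c2)) · ∫_{r−c1t}^{c2t} arccos((ξ² + (c1t)² − r²)/(2·c1t·ξ)) · ξ·(c2²t² − ξ²)^{−1/2} · exp((λ2/c2)·√(c2²t² − ξ²)) dξ. -/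

import Mathlib

/-!
Conditioning on the atom `R1 = c1 t`, which has probability `e^{-λ1 t}` and is independent of
`(R2, Θ)`, leaves a condition on `(R2, Θ)` alone. For `R2 = y ∈ (0, c2 t)` the law of cosines turns
`ρ < r` into `cos Θ > (y² + (c1 t)² - r²) / (2 c1 t y)`, of probability `arccos(·) / π` under the
uniform angle. The threshold is `≤ -1` for `y ≤ r - c1 t`, so there the angle is irrelevant and
`∫ f^{ac}` is evaluated through its primitive `-exp(-λ2 t + (λ2/c2) √(c2² t² - y²))`; on
`[r - c1 t, c2 t]` the density times `arccos(·) / π` is the stated integrand.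
-/

open MeasureTheory ProbabilityTheory

/-- Density of the absolutely continuous part of the law of the distance from
the origin of a planar Markov random flight with speed `c` and rate `lam` at time `t`. -/
noncomputable def fac (t lam c z : ℝ) : ℝ :=
  if 0 < z ∧ z < c * t then
    (lam / c) * z / Real.sqrt (c ^ 2 * t ^ 2 - z ^ 2) *
      Real.exp (-(lam * t) + (lam / c) * Real.sqrt (c ^ 2 * t ^ 2 - z ^ 2))
  else 0

/-- The law of the distance from the origin of a planar Markov random flight:
singular part `e^{-λt}·δ_{ct}` plus absolutely continuous part with density `fac`. -/
noncomputable def flightLaw (t lam c : ℝ) : Measure ℝ :=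
  ENNReal.ofReal (Real.exp (-(lam * t))) • Measure.dirac (c * t) +
    volume.withDensity fun z => ENNReal.ofReal (fac t lam c z)

/-- The uniform probability measure on a set `s ⊆ ℝ`. -/
noncomputable def uniformMeasure (s : Set ℝ) : Measure ℝ :=
  (volume s)⁻¹ • volume.restrict s

/-- The Euclidean distance between the two flights, expressed through the radii
`R1, R2` and the angle `Θ` via the law of cosines. -/
noncomputable def rho {Ω : Type*} (R1 R2 Θ : Ω → ℝ) (ω : Ω) : ℝ :=
  Real.sqrt (R1 ω ^ 2 + R2 ω ^ 2 - 2 * R1 ω * R2 ω * Real.cos (Θ ω))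

open Real Set
open scoped ENNReal

noncomputable def facAntideriv (t lam c x : ℝ) : ℝ :=
  -exp (-(lam * t) + lam / c * √(c ^ 2 * t ^ 2 - x ^ 2))

section FlightDensity

variable {t lam c : ℝ}

lemma fac_nonneg (hl : 0 ≤ lam) (hc : 0 ≤ c) (z : ℝ) : 0 ≤ fac t lam c z := by
  unfold fac
  split_ifs with hz
  · have := hz.1
    positivity
  · exact le_rfl

lemma fac_of_notMem {z : ℝ} (hz : z ∉ Ioo 0 (c * t)) : fac t lam c z = 0 :=
  if_neg hz

lemma measurable_fac : Measurable (fac t lam c) :=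
  Measurable.ite measurableSet_Ioo (by fun_prop) measurable_const

lemma continuous_facAntideriv : Continuous (facAntideriv t lam c) := by
  unfold facAntideriv
  fun_prop

lemma facAntideriv_zero (hc : 0 < c) (ht : 0 ≤ t) : facAntideriv t lam c 0 = -1 := by
  have hlt : lam / c * (c * t) = lam * t := by field_simp
  rw [facAntideriv, show c ^ 2 * t ^ 2 - 0 ^ 2 = (c * t) ^ 2 by ring,
    sqrt_sq (by positivity), hlt, neg_add_cancel, exp_zero]

lemma hasDerivAt_facAntideriv {y : ℝ} (hy : y ∈ Ioo 0 (c * t)) :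
    HasDerivAt (facAntideriv t lam c) (fac t lam c y) y := by
  have hpos : 0 < c ^ 2 * t ^ 2 - y ^ 2 := by nlinarith [hy.1, hy.2]
  have hsqrt : HasDerivAt (fun x => √(c ^ 2 * t ^ 2 - x ^ 2))
      (-(2 * y) / (2 * √(c ^ 2 * t ^ 2 - y ^ 2))) y := by
    simpa using ((hasDerivAt_pow 2 y).const_sub (c ^ 2 * t ^ 2)).sqrt hpos.ne'
  refine (((hsqrt.const_mul (lam / c)).const_add (-(lam * t))).exp).neg.congr_deriv ?_
  rw [fac, if_pos (mem_Ioo.1 hy)]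
  field_simp [(sqrt_pos.2 hpos).ne']

lemma integrableOn_fac (hl : 0 ≤ lam) (hc : 0 ≤ c) {b : ℝ} (hb : b ≤ c * t) :
    IntegrableOn (fac t lam c) (Ioc 0 b) :=
  intervalIntegral.integrableOn_deriv_of_nonneg continuous_facAntideriv.continuousOn
    (fun _ hx => hasDerivAt_facAntideriv ⟨hx.1, hx.2.trans_le hb⟩)
    (fun z _ => fac_nonneg hl hc z)

lemma integral_fac (hl : 0 ≤ lam) (hc : 0 < c) {b : ℝ} (hb0 : 0 ≤ b) (hb : b ≤ c * t) :
    ∫ y in (0 : ℝ)..b, fac t lam c y =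
      1 - exp (-(lam * t) + lam / c * √(c ^ 2 * t ^ 2 - b ^ 2)) := by
  have ht : 0 ≤ t := nonneg_of_mul_nonneg_right (hb0.trans hb) hc
  rw [intervalIntegral.integral_eq_sub_of_hasDerivAt_of_le hb0
    continuous_facAntideriv.continuousOn
    (fun _ hx => hasDerivAt_facAntideriv ⟨hx.1, hx.2.trans_le hb⟩)
    ((intervalIntegrable_iff_integrableOn_Ioc_of_le hb0).2 (integrableOn_fac hl hc.le hb)),
    facAntideriv_zero hc ht, facAntideriv]
  ring

end FlightDensity

noncomputable def cosThreshold (a r y : ℝ) : ℝ := (y ^ 2 + a ^ 2 - r ^ 2) / (2 * a * y)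

lemma sqrt_lawOfCosines_lt_iff {a r y θ : ℝ} (ha : 0 < a) (hy : 0 < y) (hr : 0 < r) :
    √(a ^ 2 + y ^ 2 - 2 * a * y * cos θ) < r ↔ cosThreshold a r y < cos θ := by
  rw [sqrt_lt' hr, cosThreshold, div_lt_iff₀ (by positivity)]
  constructor <;> intro h <;> linarith

lemma cosThreshold_le_neg_one {a r y : ℝ} (ha : 0 < a) (hy : 0 < y) (hyr : y ≤ r - a) :
    cosThreshold a r y ≤ -1 := by
  rw [cosThreshold, div_le_iff₀ (by positivity)]
  nlinarith

lemma lt_cos_iff_lt_arccos {x θ : ℝ} (h0 : 0 ≤ θ) (hπ : θ < π) : x < cos θ ↔ θ < arccos x := by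
  rcases lt_or_ge x (-1) with hx | hx
  · rw [arccos_of_le_neg_one hx.le]
    exact iff_of_true (hx.trans_le (neg_one_le_cos θ)) hπ
  rcases le_or_gt x 1 with hx1 | hx1
  · conv_lhs => rw [← cos_arccos hx hx1]
    exact strictAntiOn_cos.lt_iff_gt ⟨arccos_nonneg x, arccos_le_pi x⟩ ⟨h0, hπ.le⟩
  · rw [arccos_of_one_le hx1.le]
    exact iff_of_false (not_lt.2 ((cos_le_one θ).trans hx1.le)) (not_lt.2 h0)

lemma setOf_lt_cos_inter_Ioo_pi (x : ℝ) :
    {θ | x < cos θ} ∩ Ioo 0 π = Ioo 0 (arccos x) := by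
  ext θ
  simp only [mem_inter_iff, mem_ofPred_eq, mem_Ioo]
  constructor
  · rintro ⟨h, h0, hπ⟩
    exact ⟨h0, (lt_cos_iff_lt_arccos h0.le hπ).1 h⟩
  · rintro ⟨h0, hθ⟩
    have hπ := hθ.trans_le (arccos_le_pi x)
    exact ⟨(lt_cos_iff_lt_arccos h0.le hπ).2 hθ, h0, hπ⟩

instance (s : Set ℝ) : SFinite (uniformMeasure s) := by
  unfold uniformMeasure
  infer_instance

lemma uniformMeasure_setOf_lt_cos (x : ℝ) :
    uniformMeasure (Ioo 0 π) {θ | x < cos θ} = ENNReal.ofReal (arccos x / π) := by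
  rw [uniformMeasure, Measure.smul_apply,
    Measure.restrict_apply (measurableSet_lt measurable_const continuous_cos.measurable),
    setOf_lt_cos_inter_Ioo_pi, Real.volume_Ioo, Real.volume_Ioo, sub_zero, sub_zero, smul_eq_mul,
    ENNReal.ofReal_div_of_pos pi_pos, ENNReal.div_eq_inv_mul]

lemma ProbabilityTheory.iIndepFun.measure_prodMk_preimage_inter_preimage
    {Ω β : Type*} [MeasurableSpace Ω] [MeasurableSpace β] {μ : Measure Ω}
    [IsZeroOrProbabilityMeasure μ] {X Y Z : Ω → β} (hind : iIndepFun ![X, Y, Z] μ)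
    (hX : Measurable X) (hY : Measurable Y) (hZ : Measurable Z)
    {S : Set (β × β)} (hS : MeasurableSet S) {A : Set β} (hA : MeasurableSet A) :
    μ ((fun ω => (Y ω, Z ω)) ⁻¹' S ∩ X ⁻¹' A) = μ.map X A * ((μ.map Y).prod (μ.map Z)) S := by
  have hmeas : ∀ i, Measurable (![X, Y, Z] i) := by
    intro i
    fin_cases i <;> assumption
  have hYZ_X : IndepFun (fun ω => (Y ω, Z ω)) X μ := by
    simpa using hind.indepFun_prodMk hmeas 1 2 0 (by decide) (by decide)
  have hYZ : IndepFun Y Z μ := by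
    simpa using hind.indepFun (i := 1) (j := 2) (by decide)
  rw [indepFun_iff_measure_inter_preimage_eq_mul.1 hYZ_X S A hS hA, mul_comm,
    Measure.map_apply hX hA,
    ← (indepFun_iff_map_prod_eq_prod_map_map hY.aemeasurable hZ.aemeasurable).1 hYZ,
    Measure.map_apply (hY.prodMk hZ) hS]

section FlightLaw

variable {t lam c : ℝ}

lemma flightLaw_singleton : flightLaw t lam c {c * t} = ENNReal.ofReal (exp (-(lam * t))) := by
  simp [flightLaw]

lemma lintegral_flightLaw_of_eq_zero {g : ℝ → ℝ≥0∞} (hg : Measurable g) (h : g (c * t) = 0) :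
    ∫⁻ y, g y ∂flightLaw t lam c = ∫⁻ y in Ioo 0 (c * t), ENNReal.ofReal (fac t lam c y) * g y := by
  rw [flightLaw, lintegral_add_measure, lintegral_smul_measure, lintegral_dirac' _ hg, h,
    smul_zero, zero_add, lintegral_withDensity_eq_lintegral_mul _ measurable_fac.ennreal_ofReal hg,
    setLIntegral_eq_of_support_subset]
  · rfl
  · intro y hy
    by_contra hy'
    simp [fac_of_notMem hy'] at hy

end FlightLaw

section ArccosWeight

variable {t lam c : ℝ}

lemma integrableOn_fac_mul_arccos (hl : 0 ≤ lam) (hc : 0 ≤ c) {f : ℝ → ℝ} (hf : Measurable f) :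
    IntegrableOn (fun y => fac t lam c y * (arccos (f y) / π)) (Ioc 0 (c * t)) := by
  refine (integrableOn_fac hl hc le_rfl).mul_bdd (c := 1)
    ((continuous_arccos.measurable.comp hf).div_const π).aestronglyMeasurable
    (ae_of_all _ fun y => ?_)
  rw [norm_of_nonneg (div_nonneg (arccos_nonneg _) pi_pos.le), div_le_one pi_pos]
  exact arccos_le_pi _

lemma lintegral_ofReal_fac_mul_ofReal_arccos (hl : 0 ≤ lam) (hc : 0 ≤ c) {f : ℝ → ℝ}
    (hf : Measurable f) :
    ∫⁻ y in Ioo 0 (c * t), ENNReal.ofReal (fac t lam c y) * ENNReal.ofReal (arccos (f y) / π) =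
      ENNReal.ofReal (∫ y in Ioo 0 (c * t), fac t lam c y * (arccos (f y) / π)) := by
  simp_rw [← ENNReal.ofReal_mul (fac_nonneg hl hc _)]
  refine (ofReal_integral_eq_lintegral_ofReal
    ((integrableOn_fac_mul_arccos hl hc hf).mono_set Ioo_subset_Ioc_self)
    (ae_of_all _ fun y => ?_)).symm
  exact mul_nonneg (fac_nonneg hl hc y) (div_nonneg (arccos_nonneg _) pi_pos.le)

lemma integral_fac_mul_arccos_cosThreshold {a r : ℝ} (hl : 0 ≤ lam) (hc : 0 < c) (ha : 0 < a)
    (hr0 : a < r) (hr : r ≤ a + c * t) :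
    ∫ y in Ioo 0 (c * t), fac t lam c y * (arccos (cosThreshold a r y) / π) =
      1 - exp (-(lam * t) + lam / c * √(c ^ 2 * t ^ 2 - (r - a) ^ 2)) +
        lam * exp (-(lam * t)) / (π * c) *
          ∫ ξ in (r - a)..(c * t), arccos (cosThreshold a r ξ) *
            (ξ / √(c ^ 2 * t ^ 2 - ξ ^ 2)) * exp (lam / c * √(c ^ 2 * t ^ 2 - ξ ^ 2)) := by
  set φ := fun y => fac t lam c y * (arccos (cosThreshold a r y) / π)
  have hb0 : 0 < r - a := by linarith
  have hb : r - a ≤ c * t := by linarith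
  have hφ : IntegrableOn φ (Ioc 0 (c * t)) :=
    integrableOn_fac_mul_arccos hl hc.le (by unfold cosThreshold; fun_prop)
  have hnear : ∫ y in (0 : ℝ)..(r - a), φ y = ∫ y in (0 : ℝ)..(r - a), fac t lam c y := by
    refine intervalIntegral.integral_congr fun y hy => ?_
    rw [uIcc_of_le hb0.le] at hy
    rcases hy.1.eq_or_lt with rfl | hy0
    · simp [φ, fac_of_notMem (fun h : (0 : ℝ) ∈ Ioo 0 (c * t) => lt_irrefl _ h.1)]
    · simp only [φ]
      rw [arccos_of_le_neg_one (cosThreshold_le_neg_one ha hy0 hy.2), div_self pi_ne_zero,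
        mul_one]
  have hfar : ∫ y in (r - a)..(c * t), φ y = lam * exp (-(lam * t)) / (π * c) *
      ∫ ξ in (r - a)..(c * t), arccos (cosThreshold a r ξ) *
        (ξ / √(c ^ 2 * t ^ 2 - ξ ^ 2)) * exp (lam / c * √(c ^ 2 * t ^ 2 - ξ ^ 2)) := by
    rw [← intervalIntegral.integral_const_mul]
    refine intervalIntegral.integral_congr fun y hy => ?_
    rw [uIcc_of_le hb] at hy
    rcases hy.2.eq_or_lt with rfl | hyct
    · simp [φ, mul_pow, fac_of_notMem (fun h : c * t ∈ Ioo 0 (c * t) => lt_irrefl _ h.2)]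
    · simp only [φ]
      rw [fac, if_pos ⟨hb0.trans_le hy.1, hyct⟩, exp_add]
      ring
  rw [← integral_Ioc_eq_integral_Ioo, ← intervalIntegral.integral_of_le (hb0.le.trans hb),
    ← intervalIntegral.integral_add_adjacent_intervals
      ((intervalIntegrable_iff_integrableOn_Ioc_of_le hb0.le).2
        (hφ.mono_set (Ioc_subset_Ioc_right hb)))
      ((intervalIntegrable_iff_integrableOn_Ioc_of_le hb).2
        (hφ.mono_set (Ioc_subset_Ioc_left hb0.le))),
    hnear, hfar, integral_fac hl hc hb0.le hb]

end ArccosWeight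

noncomputable def closePairs (a r B : ℝ) : Set (ℝ × ℝ) :=
  {p | √(a ^ 2 + p.1 ^ 2 - 2 * a * p.1 * cos p.2) < r ∧ p.1 < B}

lemma measurableSet_closePairs (a r B : ℝ) : MeasurableSet (closePairs a r B) := by
  simp only [closePairs, ofPred_and]
  exact (measurableSet_lt (by fun_prop) measurable_const).inter
    (measurableSet_lt measurable_fst measurable_const)

lemma setOf_rho_lt_eq_preimage_closePairs {Ω : Type*} (R1 R2 Θ : Ω → ℝ) (a r B : ℝ) :
    {ω | rho R1 R2 Θ ω < r ∧ R1 ω = a ∧ R2 ω < B} =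
      (fun ω => (R2 ω, Θ ω)) ⁻¹' closePairs a r B ∩ R1 ⁻¹' {a} := by
  ext ω
  simp only [rho, closePairs, mem_ofPred_eq, mem_inter_iff, mem_preimage, mem_singleton_iff]
  constructor
  · rintro ⟨hρ, h1, h2⟩
    exact ⟨⟨h1 ▸ hρ, h2⟩, h1⟩
  · rintro ⟨⟨hρ, h2⟩, h1⟩
    exact ⟨h1 ▸ hρ, h1, h2⟩

lemma uniformMeasure_prodMk_preimage_closePairs {a r B y : ℝ} (ha : 0 < a) (hr : a < r)
    (hy : y ∈ Ioo 0 B) :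
    uniformMeasure (Ioo 0 π) (Prod.mk y ⁻¹' closePairs a r B) =
      ENNReal.ofReal (arccos (cosThreshold a r y) / π) := by
  have hpre : Prod.mk y ⁻¹' closePairs a r B = {θ | cosThreshold a r y < cos θ} := by
    ext θ
    simp [closePairs, hy.2, sqrt_lawOfCosines_lt_iff ha hy.1 (ha.trans hr)]
  rw [hpre, uniformMeasure_setOf_lt_cos]

lemma flightLaw_prod_uniformMeasure_closePairs {t lam c a r : ℝ} (hl : 0 ≤ lam) (hc : 0 ≤ c)
    (ha : 0 < a) (hr : a < r) :
    (flightLaw t lam c).prod (uniformMeasure (Ioo 0 π)) (closePairs a r (c * t)) =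
      ENNReal.ofReal (∫ y in Ioo 0 (c * t), fac t lam c y * (arccos (cosThreshold a r y) / π)) := by
  have hS := measurableSet_closePairs a r (c * t)
  rw [Measure.prod_apply hS,
    lintegral_flightLaw_of_eq_zero (measurable_measure_prodMk_left hS) (by simp [closePairs]),
    setLIntegral_congr_fun measurableSet_Ioo fun y hy => by
      rw [uniformMeasure_prodMk_preimage_closePairs ha hr hy],
    lintegral_ofReal_fac_mul_ofReal_arccos hl hc (by unfold cosThreshold; fun_prop)]

theorem joint_prob_second_switched_large_r_general {Ω : Type*} [MeasureSpace Ω] [IsProbabilityMeasure (ℙ : Measure Ω)]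
    (t l1 l2 c1 c2 : ℝ) (ht : 0 < t) (hl2 : 0 < l2)
    (hc2 : 0 < c2) (hc12 : c2 ≤ c1)
    (R1 R2 Θ : Ω → ℝ) (hmR1 : Measurable R1) (hmR2 : Measurable R2) (hmΘ : Measurable Θ)
    (hind : iIndepFun ![R1, R2, Θ] ℙ)
    (hR1 : Measure.map R1 ℙ = flightLaw t l1 c1)
    (hR2 : Measure.map R2 ℙ = flightLaw t l2 c2)
    (hΘ : Measure.map Θ ℙ = uniformMeasure (Set.Ioo 0 Real.pi))
    (r : ℝ) (hr0 : c1 * t < r) (hr : r ≤ (c1 + c2) * t) :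
    ℙ {ω | rho R1 R2 Θ ω < r ∧ R1 ω = c1 * t ∧ R2 ω < c2 * t}
      = ENNReal.ofReal
          (Real.exp (-(l1 * t)) *
              (1 - Real.exp (-(l2 * t) +
                (l2 / c2) * Real.sqrt (c2 ^ 2 * t ^ 2 - (r - c1 * t) ^ 2)))
            + l2 * Real.exp (-((l1 + l2) * t)) / (Real.pi * c2) *
              (∫ ξ in (r - c1 * t)..(c2 * t),
              Real.arccos ((ξ ^ 2 + (c1 * t) ^ 2 - r ^ 2) / (2 * (c1 * t) * ξ)) *
                (ξ / Real.sqrt (c2 ^ 2 * t ^ 2 - ξ ^ 2)) *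
                Real.exp ((l2 / c2) * Real.sqrt (c2 ^ 2 * t ^ 2 - ξ ^ 2)))) := by
  have ha : 0 < c1 * t := mul_pos (hc2.trans_le hc12) ht
  rw [setOf_rho_lt_eq_preimage_closePairs,
    hind.measure_prodMk_preimage_inter_preimage hmR1 hmR2 hmΘ (measurableSet_closePairs _ _ _)
      (measurableSet_singleton _),
    hR1, hR2, hΘ, flightLaw_singleton,
    flightLaw_prod_uniformMeasure_closePairs hl2.le hc2.le ha hr0,
    integral_fac_mul_arccos_cosThreshold hl2.le hc2 ha hr0 (by linarith),
    ← ENNReal.ofReal_mul (exp_pos _).le]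
  congr 1
  rw [show -((l1 + l2) * t) = -(l1 * t) + -(l2 * t) by ring, exp_add (-(l1 * t))]
  unfold cosThreshold
  ring

theorem joint_prob_second_switched_large_r {Ω : Type*} [MeasureSpace Ω] [IsProbabilityMeasure (ℙ : Measure Ω)]
    (t l1 l2 c1 c2 : ℝ) (ht : 0 < t) (hl1 : 0 < l1) (hl2 : 0 < l2)
    (hc2 : 0 < c2) (hc12 : c2 ≤ c1)
    (R1 R2 Θ : Ω → ℝ) (hmR1 : Measurable R1) (hmR2 : Measurable R2) (hmΘ : Measurable Θ)
    (hind : iIndepFun ![R1, R2, Θ] ℙ)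
    (hR1 : Measure.map R1 ℙ = flightLaw t l1 c1)
    (hR2 : Measure.map R2 ℙ = flightLaw t l2 c2)
    (hΘ : Measure.map Θ ℙ = uniformMeasure (Set.Ioo 0 Real.pi))
    (r : ℝ) (hr0 : c1 * t < r) (hr : r ≤ (c1 + c2) * t) :
    ℙ {ω | rho R1 R2 Θ ω < r ∧ R1 ω = c1 * t ∧ R2 ω < c2 * t}
      = ENNReal.ofReal
          (Real.exp (-(l1 * t)) *
              (1 - Real.exp (-(l2 * t) +
                (l2 / c2) * Real.sqrt (c2 ^ 2 * t ^ 2 - (r - c1 * t) ^ 2)))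
            + l2 * Real.exp (-((l1 + l2) * t)) / (Real.pi * c2) *
              (∫ ξ in (r - c1 * t)..(c2 * t),
              Real.arccos ((ξ ^ 2 + (c1 * t) ^ 2 - r ^ 2) / (2 * (c1 * t) * ξ)) *
                (ξ / Real.sqrt (c2 ^ 2 * t ^ 2 - ξ ^ 2)) *
                Real.exp ((l2 / c2) * Real.sqrt (c2 ^ 2 * t ^ 2 - ξ ^ 2)))) :=
  joint_prob_second_switched_large_r_general t l1 l2 c1 c2 ht hl2 hc2 hc12 R1 R2 Θ hmR1 hmR2 hmΘ
    hind hR1 hR2 hΘ r hr0 hr
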